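/- Let x and y be strings of the same length n over an alphabet Σ with d = ED(x,y) ≥ 1. For every integer t with 1 ≤ t ≤ d, there exist decompositions x = x^1 ∘ x^2 ∘ ⋯ ∘ x^t and y = y^1 ∘ y^2 ∘ ⋯ ∘ y^t into t (possibly empty) consecutive blocks such that d = Σ_{i=1}^t ED(x^i, y^i) and ED(x^i, y^i) ≤ ⌈d/t⌉ for every i ∈ {1,…,t}. -/

import Mathlib

open List

/-- Costs for edit distance (the Mathlib `Levenshtein.Cost` of Dec 2024, since removed). -/
structure Levenshtein.Cost (α β δ : Type*) where
  delete : α → δ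
  insert : β → δ
  substitute : α → β → δ

/-- The default (unit) cost, as in the Mathlib of Dec 2024. -/
def Levenshtein.defaultCost {α : Type*} [DecidableEq α] : Levenshtein.Cost α α ℕ where
  delete _ := 1
  insert _ := 1
  substitute a b := if a = b then 0 else 1

/-- Levenshtein distance, by the recurrence characterizing the Mathlib definition of Dec 2024. -/
def levenshtein {α β δ : Type*} [AddZeroClass δ] [Min δ] (C : Levenshtein.Cost α β δ) :
    List α → List β → δ
  | [], ys => (ys.map C.insert).sum
  | x :: xs, [] => C.delete x + levenshtein C xs []
  | x :: xs, y :: ys =>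
    min (C.delete x + levenshtein C xs (y :: ys))
      (min (C.insert y + levenshtein C (x :: xs) ys) (C.substitute x y + levenshtein C xs ys))

/-- Edit distance: minimum number of single-symbol insertions, deletions and
substitutions needed to transform `u` into `v` (Levenshtein distance with unit costs). -/
def ED {α : Type*} [DecidableEq α] (u v : List α) : ℕ :=
  levenshtein Levenshtein.defaultCost u v

/-!
Every prefix of an optimal alignment of `x` and `y` splits `ED x y` exactly into the cost of
the aligned prefixes plus that of the aligned suffixes, and extending the prefix by one column
raises its cost by at most one. So every value `k ≤ ED x y` is the cost of some exactly additive
split. Cutting off, one at a time, blocks whose cost is `c = ⌈d/t⌉` or whatever remains uses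
at most `t` blocks.
-/

section EditDistance

variable {α : Type*} [DecidableEq α]

theorem ED_nil_left (v : List α) : ED [] v = v.length := by
  simp [ED, levenshtein, Levenshtein.defaultCost]

theorem ED_nil_right (u : List α) : ED u [] = u.length := by
  induction u with
  | nil => exact ED_nil_left []
  | cons a u ih =>
    rw [List.length_cons, ← ih, add_comm]
    exact levenshtein.eq_2 _ a u

theorem ED_cons_cons (a b : α) (u v : List α) :
    ED (a :: u) (b :: v) =
      min (1 + ED u (b :: v)) (min (1 + ED (a :: u) v) ((if a = b then 0 else 1) + ED u v)) :=
  levenshtein.eq_3 _ a u b v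

theorem ED_cons_left_le (a : α) (u v : List α) : ED (a :: u) v ≤ 1 + ED u v := by
  cases v with
  | nil => simp only [ED_nil_right, List.length_cons]; omega
  | cons b v => rw [ED_cons_cons]; omega

theorem ED_cons_right_le (b : α) (u v : List α) : ED u (b :: v) ≤ 1 + ED u v := by
  cases u with
  | nil => simp only [ED_nil_left, List.length_cons]; omega
  | cons a u => rw [ED_cons_cons]; omega

theorem ED_append_le : ∀ u₁ v₁ u₂ v₂ : List α,
    ED (u₁ ++ u₂) (v₁ ++ v₂) ≤ ED u₁ v₁ + ED u₂ v₂
  | [], [], u₂, v₂ => by simp [ED_nil_left]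
  | [], b :: v₁, u₂, v₂ => by
    have := ED_append_le [] v₁ u₂ v₂
    have := ED_cons_right_le b u₂ (v₁ ++ v₂)
    simp_all only [List.nil_append, List.cons_append, ED_nil_left, List.length_cons]
    omega
  | a :: u₁, [], u₂, v₂ => by
    have := ED_append_le u₁ [] u₂ v₂
    have := ED_cons_left_le a (u₁ ++ u₂) v₂
    simp_all only [List.nil_append, List.cons_append, ED_nil_right, List.length_cons]
    omega
  | a :: u₁, b :: v₁, u₂, v₂ => by
    have := ED_append_le u₁ (b :: v₁) u₂ v₂
    have := ED_append_le (a :: u₁) v₁ u₂ v₂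
    have := ED_append_le u₁ v₁ u₂ v₂
    simp only [List.cons_append] at *
    rw [ED_cons_cons, ED_cons_cons]
    omega
termination_by u₁ v₁ => u₁.length + v₁.length

/-- The first column of an optimal alignment of `u` and `v` after its leading matches. -/
theorem exists_append_ED_le_one_of_pos : ∀ {u v : List α}, 0 < ED u v →
    ∃ u₁ u₂ v₁ v₂, u = u₁ ++ u₂ ∧ v = v₁ ++ v₂ ∧ ED u₁ v₁ ≤ 1 ∧ ED u₂ v₂ + 1 = ED u v
  | [], [], h => by simp [ED_nil_left] at h
  | [], b :: v, _ => ⟨[], [], [b], v, rfl, rfl, by simp [ED_nil_left], by simp [ED_nil_left]⟩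
  | a :: u, [], _ => ⟨[a], u, [], [], rfl, rfl, by simp [ED_nil_right], by simp [ED_nil_right]⟩
  | a :: u, b :: v, h => by
    have hab := ED_cons_cons a b u v
    by_cases hdel : ED (a :: u) (b :: v) = 1 + ED u (b :: v)
    · exact ⟨[a], u, [], b :: v, rfl, rfl, by simp [ED_nil_right], by omega⟩
    by_cases hins : ED (a :: u) (b :: v) = 1 + ED (a :: u) v
    · exact ⟨[], a :: u, [b], v, rfl, rfl, by simp [ED_nil_left], by omega⟩
    by_cases heq : a = b
    · subst heq
      simp only [if_true, zero_add] at hab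
      obtain ⟨u₁, u₂, v₁, v₂, rfl, rfl, h₁, h₂⟩ :=
        exists_append_ED_le_one_of_pos (u := u) (v := v) (by omega)
      refine ⟨a :: u₁, u₂, a :: v₁, v₂, rfl, rfl, ?_, by omega⟩
      have := ED_cons_cons a a u₁ v₁
      simp only [if_true, zero_add] at this
      omega
    · simp only [heq, if_false] at hab
      refine ⟨[a], u, [b], v, rfl, rfl, ?_, by omega⟩
      simp [ED_cons_cons, heq, ED_nil_left]

theorem exists_append_ED_eq {u v : List α} {k : ℕ} (hk : k ≤ ED u v) :
    ∃ u₁ u₂ v₁ v₂, u = u₁ ++ u₂ ∧ v = v₁ ++ v₂ ∧ ED u₁ v₁ = k ∧ ED u₂ v₂ + k = ED u v := by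
  induction k with
  | zero => exact ⟨[], u, [], v, rfl, rfl, by simp [ED_nil_left], rfl⟩
  | succ k ih =>
    obtain ⟨u₁, u₂, v₁, v₂, rfl, rfl, h₁, h₂⟩ := ih (by omega)
    obtain ⟨p, q, r, s, rfl, rfl, hpr, hqs⟩ := exists_append_ED_le_one_of_pos (u := u₂) (v := v₂)
      (by omega)
    refine ⟨u₁ ++ p, q, v₁ ++ r, s, (List.append_assoc _ _ _).symm,
      (List.append_assoc _ _ _).symm, ?_, by omega⟩
    have hle := ED_append_le u₁ v₁ p r
    have hge := ED_append_le (u₁ ++ p) (v₁ ++ r) q s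
    simp only [List.append_assoc] at hge
    omega

theorem exists_blocks_of_ED_le_mul {t c : ℕ} (ht : 1 ≤ t) {u v : List α} (h : ED u v ≤ t * c) :
    ∃ X Y : Fin t → List α, u = (List.ofFn X).flatten ∧ v = (List.ofFn Y).flatten ∧
      ED u v = ∑ i, ED (X i) (Y i) ∧ ∀ i, ED (X i) (Y i) ≤ c := by
  induction t, ht using Nat.le_induction generalizing u v with
  | base => exact ⟨fun _ => u, fun _ => v, by simp, by simp, by simp, fun _ => by simpa using h⟩
  | succ t _ ih =>
    obtain ⟨u₁, u₂, v₁, v₂, rfl, rfl, h₁, h₂⟩ := exists_append_ED_eq (min_le_right c (ED u v))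
    obtain ⟨X, Y, rfl, rfl, hsum, hX⟩ := ih (u := u₂) (v := v₂) (by rw [add_mul] at h; omega)
    refine ⟨Fin.cons u₁ X, Fin.cons v₁ Y, by simp [List.ofFn_succ], by simp [List.ofFn_succ],
      ?_, Fin.cases (by simp [h₁]) (by simpa using hX)⟩
    rw [Fin.sum_univ_succ]
    simp only [Fin.cons_zero, Fin.cons_succ]
    omega

end EditDistance

theorem Nat.le_mul_ceil_div {K : Type*} [Field K] [LinearOrder K] [IsStrictOrderedRing K]
    [FloorSemiring K] (d : ℕ) {t : ℕ} (ht : 0 < t) : d ≤ t * ⌈(d : K) / t⌉₊ := by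
  have h := Nat.le_ceil ((d : K) / t)
  rw [div_le_iff₀ (by exact_mod_cast ht), mul_comm] at h
  exact_mod_cast h

theorem stmt3_general {α : Type*} [DecidableEq α] (x y : List α)
    (d : ℕ) (hd : d = ED x y)
    (t : ℕ) (ht1 : 1 ≤ t) :
    ∃ X Y : Fin t → List α,
      x = (List.ofFn X).flatten ∧
      y = (List.ofFn Y).flatten ∧
      d = ∑ i : Fin t, ED (X i) (Y i) ∧
      ∀ i : Fin t, ED (X i) (Y i) ≤ ⌈(d : ℚ) / (t : ℚ)⌉₊ := by
  subst hd
  exact exists_blocks_of_ED_le_mul ht1 (Nat.le_mul_ceil_div _ ht1)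

/-- If `x, y` have the same length `n` and `d = ED(x,y) ≥ 1`, then for
every `1 ≤ t ≤ d` there are decompositions `x = x^1 ∘ ⋯ ∘ x^t`, `y = y^1 ∘ ⋯ ∘ y^t`
into `t` (possibly empty) consecutive blocks with `d = Σ_i ED(x^i, y^i)` and
`ED(x^i, y^i) ≤ ⌈d/t⌉` for every `i`. -/
theorem stmt3 {α : Type*} [DecidableEq α] (n : ℕ) (x y : List α)
    (hx : x.length = n) (hy : y.length = n)
    (d : ℕ) (hd : d = ED x y) (hd1 : 1 ≤ d)
    (t : ℕ) (ht1 : 1 ≤ t) (htd : t ≤ d) :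
    ∃ X Y : Fin t → List α,
      x = (List.ofFn X).flatten ∧
      y = (List.ofFn Y).flatten ∧
      d = ∑ i : Fin t, ED (X i) (Y i) ∧
      ∀ i : Fin t, ED (X i) (Y i) ≤ ⌈(d : ℚ) / (t : ℚ)⌉₊ :=
  stmt3_general x y d hd t ht1
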